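/- arXiv:2403.03046 — 11 statements merged into one kernel-verified Lean document; each statement's English description precedes it below -/
import Mathlib

section
/- Demand–supply inequality: if q is a matching over a set of bids B and a set of asks A, then for every price p ∈ ℕ, Vol(q) ≤ Vol(B_{≥p}) + Vol(A_{≤p}), where Vol(B_{≥p}) is the total quantity of bids with limit price at least p and Vol(A_{≤p}) is the total quantity of asks with limit price at most p. -/
/-- demand–supply inequality: if `q` is a matching over bids `B` and asks `A`,
then for every price `p`, `Vol(q) ≤ Vol(B_{≥p}) + Vol(A_{≤p})`. -/
theorem demand_supply_inequality {B A : Type*} [Fintype B] [Fintype A]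
    (β qb : B → ℕ) (α qa : A → ℕ)
    (hqb : ∀ b, 1 ≤ qb b) (hqa : ∀ a, 1 ≤ qa a)
    (q : B → A → ℕ)
    (htradable : ∀ b a, 0 < q b a → α a ≤ β b)
    (hbid : ∀ b, ∑ a, q b a ≤ qb b)
    (hask : ∀ a, ∑ b, q b a ≤ qa a) :
    ∀ p : ℕ,
      ∑ b, ∑ a, q b a ≤
        (∑ b ∈ Finset.univ.filter (fun b => p ≤ β b), qb b) +
        (∑ a ∈ Finset.univ.filter (fun a => α a ≤ p), qa a) := by
  intro p
  classical
  rw [← Finset.sum_filter_add_sum_filter_not Finset.univ (fun b => p ≤ β b)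
    (fun b => ∑ a, q b a)]
  apply Nat.add_le_add
  · exact Finset.sum_le_sum fun b _ => hbid b
  · calc ∑ b ∈ Finset.univ.filter (fun b => ¬ p ≤ β b), ∑ a, q b a
        = ∑ b ∈ Finset.univ.filter (fun b => ¬ p ≤ β b),
            ∑ a ∈ Finset.univ.filter (fun a => α a ≤ p), q b a := by
          refine Finset.sum_congr rfl fun b hb => ?_
          simp only [Finset.mem_filter, not_le] at hb
          rw [Finset.sum_filter]
          refine Finset.sum_congr rfl fun a _ => ?_
          by_cases h : α a ≤ p
          · simp [h]
          · simp only [h, if_false]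
            by_contra hne
            exact h (le_trans (htradable b a (Nat.pos_of_ne_zero (Ne.symm (fun he => hne he.symm)))) (le_of_lt hb.2))
      _ ≤ ∑ a ∈ Finset.univ.filter (fun a => α a ≤ p), ∑ b, q b a := by
          rw [Finset.sum_comm]
          exact Finset.sum_le_sum fun a _ =>
            Finset.sum_le_sum_of_subset (Finset.filter_subset _ _)
      _ ≤ _ := Finset.sum_le_sum fun a _ => hask a
end

section
/- Stronger demand–supply inequality: if q is a matching over a set of bids B and a set of asks A, then for every price p ∈ ℕ, Vol(q) ≤ Vol(B_{>p}) + Vol(A_{<p}) + min(Vol(B_{=p}), Vol(A_{=p})), where Vol(B_{>p}) is the total quantity of bids with limit price greater than p, Vol(A_{<p}) is the total quantity of asks with limit price less than p, and Vol(B_{=p}) (resp. Vol(A_{=p})) is the total quantity of bids (resp. asks) with limit price exactly p. -/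
/-- stronger demand–supply inequality: if `q` is a matching over bids `B`
and asks `A`, then for every price `p`,
`Vol(q) ≤ Vol(B_{>p}) + Vol(A_{<p}) + min(Vol(B_{=p}), Vol(A_{=p}))`. -/
theorem stronger_demand_supply_inequality {B A : Type*} [Fintype B] [Fintype A]
    (β qb : B → ℕ) (α qa : A → ℕ)
    (hqb : ∀ b, 1 ≤ qb b) (hqa : ∀ a, 1 ≤ qa a)
    (q : B → A → ℕ)
    (htradable : ∀ b a, 0 < q b a → α a ≤ β b)
    (hbid : ∀ b, ∑ a, q b a ≤ qb b)
    (hask : ∀ a, ∑ b, q b a ≤ qa a) :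
    ∀ p : ℕ,
      ∑ b, ∑ a, q b a ≤
        (∑ b ∈ Finset.univ.filter (fun b => p < β b), qb b) +
        (∑ a ∈ Finset.univ.filter (fun a => α a < p), qa a) +
        min (∑ b ∈ Finset.univ.filter (fun b => β b = p), qb b)
            (∑ a ∈ Finset.univ.filter (fun a => α a = p), qa a) := by
  intro p
  classical
  -- key lemma: low bids trade only with low asks
  have key : ∀ t : ℕ,
      ∑ b ∈ Finset.univ.filter (fun b => β b < t), ∑ a, q b a
        ≤ ∑ a ∈ Finset.univ.filter (fun a => α a < t), qa a := by
    intro t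
    calc ∑ b ∈ Finset.univ.filter (fun b => β b < t), ∑ a, q b a
        = ∑ b ∈ Finset.univ.filter (fun b => β b < t),
            ∑ a ∈ Finset.univ.filter (fun a => α a < t), q b a := by
          refine Finset.sum_congr rfl (fun b hb => ?_)
          simp only [Finset.mem_filter] at hb
          rw [← Finset.sum_filter_add_sum_filter_not Finset.univ (fun a => α a < t)]
          have hz : ∑ a ∈ Finset.univ.filter (fun a => ¬ α a < t), q b a = 0 := by
            refine Finset.sum_eq_zero (fun a ha => ?_)
            simp only [Finset.mem_filter] at ha
            by_contra h
            have := htradable b a (Nat.pos_of_ne_zero h)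
            omega
          omega
      _ = ∑ a ∈ Finset.univ.filter (fun a => α a < t),
            ∑ b ∈ Finset.univ.filter (fun b => β b < t), q b a := Finset.sum_comm
      _ ≤ ∑ a ∈ Finset.univ.filter (fun a => α a < t), ∑ b, q b a := by
          refine Finset.sum_le_sum (fun a _ => ?_)
          exact Finset.sum_le_sum_of_subset (Finset.filter_subset _ _)
      _ ≤ ∑ a ∈ Finset.univ.filter (fun a => α a < t), qa a :=
          Finset.sum_le_sum (fun a _ => hask a)
  -- main inequality for any threshold t
  have ineq : ∀ t : ℕ,
      ∑ b, ∑ a, q b a ≤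
        (∑ b ∈ Finset.univ.filter (fun b => t ≤ β b), qb b) +
        (∑ a ∈ Finset.univ.filter (fun a => α a < t), qa a) := by
    intro t
    have hsplit := Finset.sum_filter_add_sum_filter_not Finset.univ
      (fun b => t ≤ β b) (fun b => ∑ a, q b a)
    have h1 : ∑ b ∈ Finset.univ.filter (fun b => t ≤ β b), ∑ a, q b a
        ≤ ∑ b ∈ Finset.univ.filter (fun b => t ≤ β b), qb b :=
      Finset.sum_le_sum (fun b _ => hbid b)
    have h2 : ∑ b ∈ Finset.univ.filter (fun b => ¬ t ≤ β b), ∑ a, q b a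
        ≤ ∑ a ∈ Finset.univ.filter (fun a => α a < t), qa a := by
      have : Finset.univ.filter (fun b => ¬ t ≤ β b)
          = Finset.univ.filter (fun b => β b < t) := by
        ext b; simp
      rw [this]; exact key t
    omega
  have e1 : ∑ b ∈ Finset.univ.filter (fun b => p ≤ β b), qb b
      = (∑ b ∈ Finset.univ.filter (fun b => p < β b), qb b)
        + ∑ b ∈ Finset.univ.filter (fun b => β b = p), qb b := by
    rw [← Finset.sum_filter_add_sum_filter_not (Finset.univ.filter (fun b => p ≤ β b))
      (fun b => p < β b)]
    rw [Finset.filter_filter, Finset.filter_filter]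
    congr 1
    · refine Finset.sum_congr ?_ (fun _ _ => rfl)
      ext b; simp; omega
    · refine Finset.sum_congr ?_ (fun _ _ => rfl)
      ext b; simp; omega
  have e2 : Finset.univ.filter (fun b => p + 1 ≤ β b)
      = Finset.univ.filter (fun b => p < β b) := by
    ext b; simp
  have e3 : ∑ a ∈ Finset.univ.filter (fun a => α a < p + 1), qa a
      = (∑ a ∈ Finset.univ.filter (fun a => α a < p), qa a)
        + ∑ a ∈ Finset.univ.filter (fun a => α a = p), qa a := by
    rw [← Finset.sum_filter_add_sum_filter_not (Finset.univ.filter (fun a => α a < p + 1))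
      (fun a => α a < p)]
    rw [Finset.filter_filter, Finset.filter_filter]
    congr 1
    · refine Finset.sum_congr ?_ (fun _ _ => rfl)
      ext a; simp; omega
    · refine Finset.sum_congr ?_ (fun _ _ => rfl)
      ext a; simp; omega
  have i1 := ineq p
  have i2 := ineq (p + 1)
  rw [e1] at i1
  rw [e2, e3] at i2
  rcases le_total (∑ b ∈ Finset.univ.filter (fun b => β b = p), qb b)
      (∑ a ∈ Finset.univ.filter (fun a => α a = p), qa a) with h | h
  · rw [min_eq_left h]; omega
  · rw [min_eq_right h]; omega
end

section
/- If q is a matching over a set of bids B and a set of asks A, then for every price p ∈ ℕ, Vol(q) ≤ Vol(B_{>p}) + Vol(A_{<p}) + Vol(B_{=p}), where Vol(B_{>p}) is the total quantity of bids with limit price greater than p, Vol(A_{<p}) is the total quantity of asks with limit price less than p, and Vol(B_{=p}) is the total quantity of bids with limit price exactly p. -/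
/-- if `q` is a matching over bids `B` and asks `A`, then for every price `p`,
`Vol(q) ≤ Vol(B_{>p}) + Vol(A_{<p}) + Vol(B_{=p})`. -/
theorem demand_supply_inequality_bid_version {B A : Type*} [Fintype B] [Fintype A]
    (β qb : B → ℕ) (α qa : A → ℕ)
    (hqb : ∀ b, 1 ≤ qb b) (hqa : ∀ a, 1 ≤ qa a)
    (q : B → A → ℕ)
    (htradable : ∀ b a, 0 < q b a → α a ≤ β b)
    (hbid : ∀ b, ∑ a, q b a ≤ qb b)
    (hask : ∀ a, ∑ b, q b a ≤ qa a) :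
    ∀ p : ℕ,
      ∑ b, ∑ a, q b a ≤
        (∑ b ∈ Finset.univ.filter (fun b => p < β b), qb b) +
        (∑ a ∈ Finset.univ.filter (fun a => α a < p), qa a) +
        (∑ b ∈ Finset.univ.filter (fun b => β b = p), qb b) := by
  intro p
  classical
  have hsplit :
      ∑ b, ∑ a, q b a =
        (∑ b ∈ Finset.univ.filter (fun b => p ≤ β b), ∑ a, q b a) +
        (∑ b ∈ Finset.univ.filter (fun b => ¬ p ≤ β b), ∑ a, q b a) :=
    (Finset.sum_filter_add_sum_filter_not _ _ _).symm
  rw [hsplit]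
  have h1 : (∑ b ∈ Finset.univ.filter (fun b => p ≤ β b), ∑ a, q b a) ≤
      (∑ b ∈ Finset.univ.filter (fun b => p < β b), qb b) +
      (∑ b ∈ Finset.univ.filter (fun b => β b = p), qb b) := by
    calc (∑ b ∈ Finset.univ.filter (fun b => p ≤ β b), ∑ a, q b a)
        ≤ ∑ b ∈ Finset.univ.filter (fun b => p ≤ β b), qb b :=
          Finset.sum_le_sum fun b _ => hbid b
      _ = (∑ b ∈ Finset.univ.filter (fun b => p < β b), qb b) +
          (∑ b ∈ Finset.univ.filter (fun b => β b = p), qb b) := by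
          rw [← Finset.sum_union]
          · congr 1
            ext b
            simp only [Finset.mem_filter, Finset.mem_union, Finset.mem_univ, true_and]
            omega
          · rw [Finset.disjoint_filter]
            intro b _ h1 h2
            omega
  have h2 : (∑ b ∈ Finset.univ.filter (fun b => ¬ p ≤ β b), ∑ a, q b a) ≤
      ∑ a ∈ Finset.univ.filter (fun a => α a < p), qa a := by
    have key : ∀ b ∈ Finset.univ.filter (fun b => ¬ p ≤ β b),
        ∑ a, q b a = ∑ a ∈ Finset.univ.filter (fun a => α a < p), q b a := by
      intro b hb
      simp only [Finset.mem_filter, Finset.mem_univ, true_and] at hb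
      rw [Finset.sum_filter]
      apply Finset.sum_congr rfl
      intro a _
      split_ifs with h
      · rfl
      · by_contra hne
        have := htradable b a (Nat.pos_of_ne_zero hne)
        omega
    rw [Finset.sum_congr rfl key, Finset.sum_comm' (fun _ _ => Iff.rfl)]
    calc ∑ a ∈ Finset.univ.filter (fun a => α a < p),
            ∑ b ∈ Finset.univ.filter (fun b => ¬ p ≤ β b), q b a
        ≤ ∑ a ∈ Finset.univ.filter (fun a => α a < p), ∑ b, q b a :=
          Finset.sum_le_sum fun a _ =>
            Finset.sum_le_sum_of_subset (Finset.filter_subset _ _)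
      _ ≤ ∑ a ∈ Finset.univ.filter (fun a => α a < p), qa a :=
          Finset.sum_le_sum fun a _ => hask a
  omega
end

section
/- If q is a matching over a set of bids B and a set of asks A, then for every price p ∈ ℕ, Vol(q) ≤ Vol(B_{>p}) + Vol(A_{<p}) + Vol(A_{=p}), where Vol(B_{>p}) is the total quantity of bids with limit price greater than p, Vol(A_{<p}) is the total quantity of asks with limit price less than p, and Vol(A_{=p}) is the total quantity of asks with limit price exactly p. -/
/-- if `q` is a matching over bids `B` and asks `A`, then for every price `p`,
`Vol(q) ≤ Vol(B_{>p}) + Vol(A_{<p}) + Vol(A_{=p})`. -/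
theorem demand_supply_inequality_ask_version {B A : Type*} [Fintype B] [Fintype A]
    (β qb : B → ℕ) (α qa : A → ℕ)
    (hqb : ∀ b, 1 ≤ qb b) (hqa : ∀ a, 1 ≤ qa a)
    (q : B → A → ℕ)
    (htradable : ∀ b a, 0 < q b a → α a ≤ β b)
    (hbid : ∀ b, ∑ a, q b a ≤ qb b)
    (hask : ∀ a, ∑ b, q b a ≤ qa a) :
    ∀ p : ℕ,
      ∑ b, ∑ a, q b a ≤
        (∑ b ∈ Finset.univ.filter (fun b => p < β b), qb b) +
        (∑ a ∈ Finset.univ.filter (fun a => α a < p), qa a) +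
        (∑ a ∈ Finset.univ.filter (fun a => α a = p), qa a) := by
  intro p
  classical
  rw [← Finset.sum_filter_add_sum_filter_not Finset.univ (fun b : B => p < β b)
    (fun b => ∑ a, q b a)]
  have h1 : ∑ b ∈ Finset.univ.filter (fun b => p < β b), ∑ a, q b a ≤
      ∑ b ∈ Finset.univ.filter (fun b => p < β b), qb b :=
    Finset.sum_le_sum fun b _ => hbid b
  have h2 : ∑ b ∈ Finset.univ.filter (fun b => ¬ p < β b), ∑ a, q b a ≤
      (∑ a ∈ Finset.univ.filter (fun a => α a < p), qa a) +
      (∑ a ∈ Finset.univ.filter (fun a => α a = p), qa a) := by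
    rw [Finset.sum_comm]
    have hzero : ∀ a ∈ Finset.univ.filter (fun a : A => ¬ α a ≤ p),
        ∑ b ∈ Finset.univ.filter (fun b : B => ¬ p < β b), q b a = 0 := by
      intro a ha
      simp only [Finset.mem_filter] at ha
      apply Finset.sum_eq_zero
      intro b hb
      simp only [Finset.mem_filter, not_lt] at hb
      by_contra h
      exact ha.2 ((htradable b a (Nat.pos_of_ne_zero h)).trans hb.2)
    calc ∑ a, ∑ b ∈ Finset.univ.filter (fun b : B => ¬ p < β b), q b a
        = ∑ a ∈ Finset.univ.filter (fun a : A => α a ≤ p),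
            ∑ b ∈ Finset.univ.filter (fun b : B => ¬ p < β b), q b a := by
          rw [← Finset.sum_filter_add_sum_filter_not Finset.univ (fun a : A => α a ≤ p)]
          rw [Finset.sum_eq_zero hzero, add_zero]
      _ ≤ ∑ a ∈ Finset.univ.filter (fun a : A => α a ≤ p), qa a := by
          apply Finset.sum_le_sum
          intro a _
          exact le_trans (Finset.sum_le_sum_of_subset (Finset.filter_subset _ _)) (hask a)
      _ = (∑ a ∈ Finset.univ.filter (fun a => α a < p), qa a) +
          (∑ a ∈ Finset.univ.filter (fun a => α a = p), qa a) := by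
          rw [← Finset.sum_union]
          · congr 1
            ext a
            simp [le_iff_lt_or_eq]
          · simp +contextual [Finset.disjoint_filter]
            intro a h; omega
  omega
end

section
/- Fairness theorem: given a set of bids B, a set of asks A (with injective timestamps), and a matching q over (B, A), there exists a fair matching q' over (B, A) such that (a) Vol(q') = Vol(q), and (b) if q is uniform then q' is uniform. -/
/-- Core transfer lemma: given a rank `ρ` on rows (lower rank = more competitive),
row capacities `cap`, and a compatibility predicate `P` inherited by more competitive
rows, any `q` with support in `P` and row sums ≤ `cap` can be transformed into a
row-fair `q'` with the same column sums. -/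
lemma core_transfer {R C : Type*} [Fintype R] [Fintype C]
    (ρ cap : R → ℕ) (P : R → C → Prop)
    (hP : ∀ r₁ r₂ c, ρ r₁ < ρ r₂ → P r₂ c → P r₁ c) :
    ∀ n (q : R → C → ℕ), (∑ r, ρ r * ∑ c, q r c) < n →
      (∀ r c, 0 < q r c → P r c) → (∀ r, ∑ c, q r c ≤ cap r) →
      ∃ q' : R → C → ℕ,
        (∀ r c, 0 < q' r c → P r c) ∧
        (∀ r, ∑ c, q' r c ≤ cap r) ∧
        (∀ c, ∑ r, q' r c = ∑ r, q r c) ∧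
        (∀ r₁ r₂, ρ r₁ < ρ r₂ → 1 ≤ ∑ c, q' r₂ c → ∑ c, q' r₁ c = cap r₁) := by
  intro n
  induction n with
  | zero => intro q h; exact absurd h (Nat.not_lt_zero _)
  | succ n ih =>
    intro q hM hsupp hrow
    by_cases hfair : ∀ r₁ r₂, ρ r₁ < ρ r₂ → 1 ≤ ∑ c, q r₂ c → ∑ c, q r₁ c = cap r₁
    · exact ⟨q, hsupp, hrow, fun c => rfl, hfair⟩
    · push_neg at hfair
      obtain ⟨r₁, r₂, hlt, hpos2, hne⟩ := hfair
      have hS1 : ∑ c, q r₁ c < cap r₁ := lt_of_le_of_ne (hrow r₁) hne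
      have hex : ∃ c₀, q r₂ c₀ ≠ 0 := by
        by_contra h
        push_neg at h
        simp [h] at hpos2
      obtain ⟨c₀, hc₀⟩ := hex
      have hq2pos : 1 ≤ q r₂ c₀ := Nat.one_le_iff_ne_zero.mpr hc₀
      have hr12 : r₁ ≠ r₂ := by rintro rfl; exact lt_irrefl _ hlt
      classical
      set qn : R → C → ℕ := fun r c =>
        if r = r₁ ∧ c = c₀ then q r₁ c₀ + 1
        else if r = r₂ ∧ c = c₀ then q r₂ c₀ - 1
        else q r c with hqn
      -- row sums
      have hrow1 : ∑ c, qn r₁ c = ∑ c, q r₁ c + 1 := by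
        have e : ∀ c, qn r₁ c = q r₁ c + (if c = c₀ then 1 else 0) := by
          intro c
          by_cases hc : c = c₀ <;> simp [hqn, hc, hr12]
        simp [e, Finset.sum_add_distrib]
      have hrow2 : ∑ c, qn r₂ c + 1 = ∑ c, q r₂ c := by
        have e : ∀ c, qn r₂ c + (if c = c₀ then 1 else 0) = q r₂ c := by
          intro c
          by_cases hc : c = c₀ <;> simp [hqn, hc, hr12.symm] <;> omega
        calc ∑ c, qn r₂ c + 1 = ∑ c, (qn r₂ c + (if c = c₀ then 1 else 0)) := by
              simp [Finset.sum_add_distrib]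
          _ = ∑ c, q r₂ c := by simp [e]
      have hrowo : ∀ r, r ≠ r₁ → r ≠ r₂ → ∀ c, qn r c = q r c := by
        intro r h1 h2 c; simp [hqn, h1, h2]
      -- column sums preserved
      have hcol : ∀ c, ∑ r, qn r c = ∑ r, q r c := by
        intro c
        by_cases hc : c = c₀
        · rw [hc]
          have e : ∀ r, qn r c₀ + (if r = r₂ then 1 else 0)
              = q r c₀ + (if r = r₁ then 1 else 0) := by
            intro r
            by_cases h1 : r = r₁
            · rw [h1]; simp [hqn, hr12]
            · by_cases h2 : r = r₂
              · rw [h2]; simp [hqn, Ne.symm hr12]; omega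
              · simp [hqn, h1, h2]
          have := Finset.sum_congr rfl (fun r (_ : r ∈ Finset.univ) => e r)
          simp [Finset.sum_add_distrib] at this
          omega
        · exact Finset.sum_congr rfl fun r _ => by simp [hqn, hc]
      -- measure decreases
      have hMn : ∑ r, ρ r * ∑ c, qn r c < ∑ r, ρ r * ∑ c, q r c := by
        have e : ∀ r, ρ r * ∑ c, qn r c + (if r = r₂ then ρ r₂ else 0)
            = ρ r * ∑ c, q r c + (if r = r₁ then ρ r₁ else 0) := by
          intro r
          by_cases h1 : r = r₁
          · rw [h1]; simp [hr12, hrow1]; ring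
          · by_cases h2 : r = r₂
            · rw [h2]
              simp [Ne.symm hr12]
              calc ρ r₂ * ∑ c, qn r₂ c + ρ r₂ = ρ r₂ * (∑ c, qn r₂ c + 1) := by ring
                _ = ρ r₂ * ∑ c, q r₂ c := by rw [hrow2]
            · simp [h1, h2, hrowo r h1 h2]
        have := Finset.sum_congr rfl (fun r (_ : r ∈ Finset.univ) => e r)
        simp [Finset.sum_add_distrib] at this
        omega
      -- hypotheses for qn
      have hsuppn : ∀ r c, 0 < qn r c → P r c := by
        intro r c h
        by_cases h1 : r = r₁ ∧ c = c₀
        · rw [h1.1, h1.2]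
          exact hP r₁ r₂ c₀ hlt (hsupp r₂ c₀ hq2pos)
        · by_cases h2 : r = r₂ ∧ c = c₀
          · rw [h2.1, h2.2]
            exact hsupp r₂ c₀ hq2pos
          · apply hsupp
            simpa [hqn, h1, h2] using h
      have hrown : ∀ r, ∑ c, qn r c ≤ cap r := by
        intro r
        by_cases h1 : r = r₁
        · rw [h1]; omega
        · by_cases h2 : r = r₂
          · rw [h2]
            have := hrow r₂; omega
          · rw [Finset.sum_congr rfl fun c _ => hrowo r h1 h2 c]
            exact hrow r
      obtain ⟨q', ha, hb, hc, hd⟩ := ih qn (by omega) hsuppn hrown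
      exact ⟨q', ha, hb, fun c => (hc c).trans (hcol c), hd⟩

section
variable {R : Type*} [Fintype R]

/-- Rank function for lex-competitiveness: price-priority `p` (bigger is better when
`flip = true`... ) — we build it directly for both orientations. -/
lemma rank_exists (p tm : R → ℕ) :
    ∃ ρ : R → ℕ,
      (∀ r₁ r₂, (p r₂ < p r₁ ∨ (p r₁ = p r₂ ∧ tm r₁ < tm r₂)) → ρ r₁ < ρ r₂) ∧
      (∀ r₁ r₂, ρ r₁ < ρ r₂ → p r₂ ≤ p r₁) := by
  classical
  set N := Finset.univ.sup p with hN
  set T := Finset.univ.sup tm + 1 with hT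
  refine ⟨fun r => (N - p r) * T + tm r, ?_, ?_⟩
  · intro r₁ r₂ h
    show (N - p r₁) * T + tm r₁ < (N - p r₂) * T + tm r₂
    have hp1 : p r₁ ≤ N := Finset.le_sup (Finset.mem_univ r₁)
    have hp2 : p r₂ ≤ N := Finset.le_sup (Finset.mem_univ r₂)
    have ht1 : tm r₁ < T := Nat.lt_succ_of_le (Finset.le_sup (Finset.mem_univ r₁))
    rcases h with h | ⟨he, hts⟩
    · have h1 : N - p r₁ + 1 ≤ N - p r₂ := by omega
      calc (N - p r₁) * T + tm r₁ < (N - p r₁) * T + T := by omega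
        _ = (N - p r₁ + 1) * T := by ring
        _ ≤ (N - p r₂) * T := Nat.mul_le_mul_right T h1
        _ ≤ (N - p r₂) * T + tm r₂ := Nat.le_add_right _ _
    · rw [he]; omega
  · intro r₁ r₂ h
    replace h : (N - p r₁) * T + tm r₁ < (N - p r₂) * T + tm r₂ := h
    by_contra hc
    push_neg at hc
    have hp1 : p r₁ ≤ N := Finset.le_sup (Finset.mem_univ r₁)
    have hp2 : p r₂ ≤ N := Finset.le_sup (Finset.mem_univ r₂)
    have ht2 : tm r₂ < T := Nat.lt_succ_of_le (Finset.le_sup (Finset.mem_univ r₂))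
    -- hc : p r₁ < p r₂, so ρ r₂ < ρ r₁, contradiction
    have h1 : N - p r₂ + 1 ≤ N - p r₁ := by omega
    have : (N - p r₂) * T + tm r₂ < (N - p r₁) * T + tm r₁ := by
      calc (N - p r₂) * T + tm r₂ < (N - p r₂) * T + T := by omega
        _ = (N - p r₂ + 1) * T := by ring
        _ ≤ (N - p r₁) * T := Nat.mul_le_mul_right T h1
        _ ≤ (N - p r₁) * T + tm r₁ := Nat.le_add_right _ _
    omega

end

/-- fairness theorem: given bids `B`, asks `A` (with injective timestamps)
and a matching `q` over `(B, A)`, there exists a fair matching `q'` over `(B, A)` with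
(a) `Vol(q') = Vol(q)`, and (b) if `q` is uniform then `q'` is uniform. -/
theorem exists_fair_matching {B A : Type*} [Fintype B] [Fintype A]
    (β qb t : B → ℕ) (α qa s : A → ℕ)
    (hqb : ∀ b, 1 ≤ qb b) (hqa : ∀ a, 1 ≤ qa a)
    (ht : Function.Injective t) (hs : Function.Injective s)
    (q : B → A → ℕ)
    (htradable : ∀ b a, 0 < q b a → α a ≤ β b)
    (hbid : ∀ b, ∑ a, q b a ≤ qb b)
    (hask : ∀ a, ∑ b, q b a ≤ qa a) :
    ∃ q' : B → A → ℕ,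
      -- q' is a matching over (B, A)
      (∀ b a, 0 < q' b a → α a ≤ β b) ∧
      (∀ b, ∑ a, q' b a ≤ qb b) ∧
      (∀ a, ∑ b, q' b a ≤ qa a) ∧
      -- q' is fair on bids
      (∀ b₁ b₂ : B, (β b₂ < β b₁ ∨ (β b₁ = β b₂ ∧ t b₁ < t b₂)) →
        1 ≤ ∑ a, q' b₂ a → ∑ a, q' b₁ a = qb b₁) ∧
      -- q' is fair on asks
      (∀ a₁ a₂ : A, (α a₁ < α a₂ ∨ (α a₁ = α a₂ ∧ s a₁ < s a₂)) →
        1 ≤ ∑ b, q' b a₂ → ∑ b, q' b a₁ = qa a₁) ∧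
      -- (a) same volume
      (∑ b, ∑ a, q' b a = ∑ b, ∑ a, q b a) ∧
      -- (b) uniformity is preserved
      ((∃ π : ℕ, ∀ b a, 0 < q b a → α a ≤ π ∧ π ≤ β b) →
        (∃ π : ℕ, ∀ b a, 0 < q' b a → α a ≤ π ∧ π ≤ β b)) := by
  classical
  -- ranks for bids and asks
  obtain ⟨ρB, hρB1, hρB2⟩ := rank_exists β t
  set M := Finset.univ.sup α with hM
  have hαM : ∀ a, α a ≤ M := fun a => Finset.le_sup (Finset.mem_univ a)
  obtain ⟨ρA, hρA1, hρA2⟩ := rank_exists (fun a => M - α a) s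
  -- uniform price, if any
  set U : Prop := ∃ π : ℕ, ∀ b a, 0 < q b a → α a ≤ π ∧ π ≤ β b with hUdef
  set π0 : ℕ := if h : U then h.choose else 0 with hπ0def
  have hπ0 : ∀ (h : U), ∀ b a, 0 < q b a → α a ≤ π0 ∧ π0 ≤ β b := by
    intro h
    rw [hπ0def, dif_pos h]
    exact h.choose_spec
  set P : B → A → Prop := fun b a => α a ≤ β b ∧ (U → (α a ≤ π0 ∧ π0 ≤ β b)) with hPdef
  -- first pass: fairness on bids
  have hPB : ∀ b₁ b₂ a, ρB b₁ < ρB b₂ → P b₂ a → P b₁ a := by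
    intro b₁ b₂ a hlt h
    have hβ : β b₂ ≤ β b₁ := hρB2 b₁ b₂ hlt
    exact ⟨le_trans h.1 hβ, fun hU => ⟨(h.2 hU).1, le_trans (h.2 hU).2 hβ⟩⟩
  obtain ⟨q1, hq1supp, hq1row, hq1col, hq1fair⟩ :=
    core_transfer ρB qb P hPB ((∑ b, ρB b * ∑ a, q b a) + 1) q (Nat.lt_succ_self _)
      (fun b a h => ⟨htradable b a h, fun hU => hπ0 hU b a h⟩) hbid
  -- second pass: fairness on asks, on the transposed matrix
  have hPA : ∀ a₁ a₂ b, ρA a₁ < ρA a₂ → P b a₂ → P b a₁ := by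
    intro a₁ a₂ b hlt h
    have hα : α a₁ ≤ α a₂ := by
      have := hρA2 a₁ a₂ hlt
      have h1 := hαM a₁
      have h2 := hαM a₂
      omega
    exact ⟨le_trans hα h.1, fun hU => ⟨le_trans hα (h.2 hU).1, (h.2 hU).2⟩⟩
  obtain ⟨q2, hq2supp, hq2row, hq2col, hq2fair⟩ :=
    core_transfer ρA qa (fun a b => P b a) hPA
      ((∑ a, ρA a * ∑ b, q1 b a) + 1) (fun a b => q1 b a) (Nat.lt_succ_self _)
      (fun a b h => hq1supp b a h)
      (fun a => (hq1col a) ▸ hask a)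
  refine ⟨fun b a => q2 a b, ?_, ?_, ?_, ?_, ?_, ?_, ?_⟩
  · exact fun b a h => (hq2supp a b h).1
  · intro b
    rw [hq2col b]
    exact hq1row b
  · exact hq2row
  · intro b₁ b₂ hcomp h1
    rw [hq2col b₁]
    rw [hq2col b₂] at h1
    exact hq1fair b₁ b₂ (hρB1 b₁ b₂ hcomp) h1
  · intro a₁ a₂ hcomp h1
    refine hq2fair a₁ a₂ (hρA1 a₁ a₂ ?_) h1
    have h1 := hαM a₁
    have h2 := hαM a₂
    rcases hcomp with h | ⟨he, hsl⟩
    · left; omega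
    · right; exact ⟨by omega, hsl⟩
  · calc ∑ b, ∑ a, q2 a b = ∑ b, ∑ a, q1 b a :=
          Finset.sum_congr rfl fun b _ => hq2col b
      _ = ∑ a, ∑ b, q1 b a := Finset.sum_comm
      _ = ∑ a, ∑ b, q b a := Finset.sum_congr rfl fun a _ => hq1col a
      _ = ∑ b, ∑ a, q b a := Finset.sum_comm
  · intro hU
    exact ⟨π0, fun b a h => (hq2supp a b h).2 hU⟩
end

section
/- Let V₁ be the maximum volume over all matchings over (B, A), V₂ the maximum volume over all fair matchings, V₃ the maximum volume over all uniform matchings, and V₄ the maximum volume over all matchings that are both uniform and fair. Then V₁ = V₂ ≥ V₃ = V₄. -/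
section Ladder
open Finset

variable {ι : Type*} [Fintype ι] [DecidableEq ι]
variable (r : ι → ι → Prop) [DecidableRel r] (w : ι → ℕ) (v : ℕ)

/-- Cumulative weight of elements strictly preceding `i` in the order `r`. -/
def lcum (i : ι) : ℕ := ∑ j ∈ univ.filter (fun j => r j i), w j

/-- Start of the interval of `i`, truncated at `v`. -/
def lS (i : ι) : ℕ := min v (lcum r w i)
/-- End of the interval of `i`, truncated at `v`. -/
def lE (i : ι) : ℕ := min v (lcum r w i + w i)
/-- The (forward) interval of `i`. -/
def lI (i : ι) : Finset ℕ := Ico (lS r w v i) (lE r w v i)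
/-- The reversed interval of `i`. -/
def lJ (i : ι) : Finset ℕ := Ico (v - lE r w v i) (v - lS r w v i)

variable {r w v}

set_option linter.unusedSectionVars false

lemma lcum_step (htr : Transitive r) (hirr : ∀ i, ¬ r i i) {i j : ι} (hij : r i j) :
    lcum r w i + w i ≤ lcum r w j := by
  have hnotmem : i ∉ univ.filter (fun j' => r j' i) := by simp [hirr i]
  have hsum : lcum r w i + w i = ∑ x ∈ insert i (univ.filter (fun j' => r j' i)), w x := by
    rw [sum_insert hnotmem, lcum]; ring
  rw [hsum, lcum]
  apply sum_le_sum_of_subset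
  intro x hx
  simp only [mem_insert, mem_filter, mem_univ, true_and] at hx ⊢
  rcases hx with rfl | hx
  · exact hij
  · exact htr hx hij

lemma lE_le_lS (htr : Transitive r) (hirr : ∀ i, ¬ r i i) {i j : ι} (hij : r i j) :
    lE r w v i ≤ lS r w v j := by
  have := lcum_step htr hirr (w := w) hij
  unfold lE lS; omega

lemma lI_card (i : ι) : (lI r w v i).card = lE r w v i - lS r w v i := Nat.card_Ico _ _

lemma lI_card_le (i : ι) : (lI r w v i).card ≤ w i := by
  rw [lI_card]; unfold lE lS; omega

lemma lJ_card (i : ι) : (lJ r w v i).card = (lI r w v i).card := by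
  rw [lJ, lI, Nat.card_Ico, Nat.card_Ico]; unfold lE lS; omega

lemma lI_subset (i : ι) : lI r w v i ⊆ Ico 0 v := by
  intro k hk; simp only [lI, mem_Ico] at hk ⊢
  have : lE r w v i ≤ v := min_le_left _ _
  omega

lemma lJ_subset (i : ι) : lJ r w v i ⊆ Ico 0 v := by
  intro k hk; simp only [lJ, mem_Ico] at hk ⊢
  omega

lemma lI_disjoint (htr : Transitive r) (hirr : ∀ i, ¬ r i i)
    (htot : ∀ i j : ι, i ≠ j → r i j ∨ r j i) {i j : ι} (hij : i ≠ j) :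
    Disjoint (lI r w v i) (lI r w v j) := by
  rw [Finset.disjoint_left]
  intro k hk hk'
  simp only [lI, mem_Ico] at hk hk'
  rcases htot i j hij with h | h
  · have := lE_le_lS (w := w) (v := v) htr hirr h; omega
  · have := lE_le_lS (w := w) (v := v) htr hirr h; omega

lemma lJ_disjoint (htr : Transitive r) (hirr : ∀ i, ¬ r i i)
    (htot : ∀ i j : ι, i ≠ j → r i j ∨ r j i) {i j : ι} (hij : i ≠ j) :
    Disjoint (lJ r w v i) (lJ r w v j) := by
  rw [Finset.disjoint_left]
  intro k hk hk'
  simp only [lJ, mem_Ico] at hk hk'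
  have h1 : lS r w v i ≤ lE r w v i := by unfold lE lS; omega
  have h2 : lS r w v j ≤ lE r w v j := by unfold lE lS; omega
  rcases htot i j hij with h | h
  · have := lE_le_lS (w := w) (v := v) htr hirr h; omega
  · have := lE_le_lS (w := w) (v := v) htr hirr h; omega

lemma lI_cover (htr : Transitive r) (hirr : ∀ i, ¬ r i i)
    (htot : ∀ i j : ι, i ≠ j → r i j ∨ r j i) (hw : v ≤ ∑ i, w i)
    {k : ℕ} (hk : k < v) :
    ∃ i, lS r w v i ≤ k ∧ k < lE r w v i := by
  have hne : (univ : Finset ι).Nonempty := by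
    rcases Finset.eq_empty_or_nonempty (univ : Finset ι) with h | h
    · exfalso; rw [h] at hw; simp at hw; omega
    · exact h
  obtain ⟨i₀, -, hi₀⟩ := Finset.exists_min_image univ (lcum r w) hne
  have hi₀0 : lcum r w i₀ = 0 := by
    by_contra h0
    obtain ⟨j, hj, hwj⟩ := Finset.exists_ne_zero_of_sum_ne_zero h0
    simp only [mem_filter, mem_univ, true_and] at hj
    have := lcum_step htr hirr (w := w) hj
    have := hi₀ j (mem_univ j)
    omega
  set T : Finset ι := univ.filter (fun i => lcum r w i ≤ k) with hT
  have hTne : T.Nonempty := ⟨i₀, by simp [hT, hi₀0]⟩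
  set N : ι → ℕ := fun i => (univ.filter (fun j => r j i)).card with hN
  obtain ⟨i, hiT, hiN⟩ := Finset.exists_max_image T N hTne
  simp only [hT, mem_filter, mem_univ, true_and] at hiT
  refine ⟨i, by unfold lS; omega, ?_⟩
  have hkey : k < lcum r w i + w i := by
    by_contra hle
    push_neg at hle
    by_cases hmax : ∀ j : ι, j ≠ i → r j i
    · have hfe : univ.filter (fun j => r j i) = univ.erase i := by
        ext x
        simp only [mem_filter, mem_univ, true_and, mem_erase, and_true]
        constructor
        · rintro hx rfl; exact hirr _ hx
        · exact hmax x
      have : lcum r w i + w i = ∑ j, w j := by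
        rw [lcum, hfe, Finset.sum_erase_add _ _ (mem_univ i)]
      omega
    · push_neg at hmax
      obtain ⟨j₀, hj₀ne, hj₀⟩ := hmax
      have hij₀ : r i j₀ := (htot i j₀ (Ne.symm hj₀ne)).resolve_right hj₀
      set U : Finset ι := univ.filter (fun j => r i j) with hU
      have hUne : U.Nonempty := ⟨j₀, by simp [hU, hij₀]⟩
      obtain ⟨j, hjU, hjN⟩ := Finset.exists_min_image U N hUne
      simp only [hU, mem_filter, mem_univ, true_and] at hjU
      have hpred : univ.filter (fun x => r x j) = insert i (univ.filter (fun x => r x i)) := by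
        ext x
        simp only [mem_filter, mem_univ, true_and, mem_insert]
        constructor
        · intro hx
          by_cases hxi : x = i
          · exact Or.inl hxi
          · by_cases hxi' : r x i
            · exact Or.inr hxi'
            · exfalso
              have hix : r i x := (htot i x (Ne.symm hxi)).resolve_right hxi'
              have hxU : x ∈ U := by simp [hU, hix]
              have hss : univ.filter (fun y => r y x) ⊂ univ.filter (fun y => r y j) := by
                constructor
                · intro y hy
                  simp only [mem_filter, mem_univ, true_and] at hy ⊢
                  exact htr hy hx
                · intro hsub
                  have : x ∈ univ.filter (fun y => r y x) := hsub (by simp [hx])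
                  simp only [mem_filter, mem_univ, true_and] at this
                  exact hirr _ this
              have := Finset.card_lt_card hss
              have := hjN x hxU
              simp only [hN] at *
              omega
        · rintro (rfl | hx)
          · exact hjU
          · exact htr hx hjU
      have hnoti : i ∉ univ.filter (fun x => r x i) := by simp [hirr i]
      have hcumj : lcum r w j = lcum r w i + w i := by
        rw [lcum, hpred, sum_insert hnoti, lcum]; ring
      have hjT : j ∈ T := by simp [hT]; omega
      have hNj : N j = N i + 1 := by
        simp only [hN]
        rw [hpred, Finset.card_insert_of_notMem hnoti]
      have := hiN j hjT
      omega
  unfold lE; omega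

lemma lJ_cover (htr : Transitive r) (hirr : ∀ i, ¬ r i i)
    (htot : ∀ i j : ι, i ≠ j → r i j ∨ r j i) (hw : v ≤ ∑ i, w i)
    {k : ℕ} (hk : k < v) :
    ∃ i, v - lE r w v i ≤ k ∧ k < v - lS r w v i := by
  obtain ⟨i, h1, h2⟩ := lI_cover htr hirr htot hw (k := v - 1 - k) (by omega)
  have h3 : lE r w v i ≤ v := min_le_left _ _
  exact ⟨i, by omega, by omega⟩

lemma lI_biUnion (htr : Transitive r) (hirr : ∀ i, ¬ r i i)
    (htot : ∀ i j : ι, i ≠ j → r i j ∨ r j i) (hw : v ≤ ∑ i, w i) :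
    univ.biUnion (lI r w v) = Ico 0 v := by
  apply Finset.Subset.antisymm
  · intro k hk
    simp only [mem_biUnion] at hk
    obtain ⟨i, -, hi⟩ := hk
    exact lI_subset i hi
  · intro k hk
    simp only [mem_Ico] at hk
    obtain ⟨i, h1, h2⟩ := lI_cover htr hirr htot hw hk.2
    simp only [mem_biUnion]
    exact ⟨i, mem_univ i, by simp [lI, mem_Ico]; omega⟩

lemma lJ_biUnion (htr : Transitive r) (hirr : ∀ i, ¬ r i i)
    (htot : ∀ i j : ι, i ≠ j → r i j ∨ r j i) (hw : v ≤ ∑ i, w i) :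
    univ.biUnion (lJ r w v) = Ico 0 v := by
  apply Finset.Subset.antisymm
  · intro k hk
    simp only [mem_biUnion] at hk
    obtain ⟨i, -, hi⟩ := hk
    exact lJ_subset i hi
  · intro k hk
    simp only [mem_Ico] at hk
    obtain ⟨i, h1, h2⟩ := lJ_cover htr hirr htot hw hk.2
    simp only [mem_biUnion]
    exact ⟨i, mem_univ i, by simp [lJ, mem_Ico]; omega⟩

lemma lI_full (htr : Transitive r) (hirr : ∀ i, ¬ r i i) {i j : ι} (hij : r i j)
    (hj : 1 ≤ (lI r w v j).card) :
    (lI r w v i).card = w i := by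
  have h1 := lcum_step htr hirr (w := w) hij
  rw [lI_card] at hj ⊢
  unfold lE lS at *
  omega

end Ladder

open Finset in
lemma sum_card_inter {A : Type*} [Fintype A] [DecidableEq A] (I : Finset ℕ) (J : A → Finset ℕ)
    (v : ℕ) (hd : ∀ a a' : A, a ≠ a' → Disjoint (J a) (J a'))
    (hu : univ.biUnion J = Ico 0 v) (hI : I ⊆ Ico 0 v) :
    ∑ a, (I ∩ J a).card = I.card := by
  rw [← Finset.card_biUnion]
  · congr 1
    ext k
    simp only [mem_biUnion]
    constructor
    · rintro ⟨a, -, hk⟩; exact (Finset.mem_inter.mp hk).1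
    · intro hk
      have h2 : k ∈ univ.biUnion J := by rw [hu]; exact hI hk
      obtain ⟨a, -, ha⟩ := mem_biUnion.mp h2
      exact ⟨a, mem_univ a, Finset.mem_inter.mpr ⟨hk, ha⟩⟩
  · intro a _ a' _ hne
    exact Finset.disjoint_of_subset_left (Finset.inter_subset_right)
      (Finset.disjoint_of_subset_right (Finset.inter_subset_right) (hd a a' hne))

section ExchangeProblem

variable {B A : Type*} [Fintype B] [Fintype A]

/-- `q` is a matching over bids with prices `β`, quantities `qb`, and asks with
prices `α`, quantities `qa`. -/
def IsMatching (β qb : B → ℕ) (α qa : A → ℕ) (q : B → A → ℕ) : Prop :=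
  (∀ b a, 0 < q b a → α a ≤ β b) ∧
  (∀ b, ∑ a, q b a ≤ qb b) ∧
  (∀ a, ∑ b, q b a ≤ qa a)

/-- The volume of a matching. -/
def Vol (q : B → A → ℕ) : ℕ := ∑ b, ∑ a, q b a

/-- `q` is fair: more competitive bids (resp. asks) are fully traded whenever a less
competitive one participates. -/
def IsFair (β qb t : B → ℕ) (α qa s : A → ℕ) (q : B → A → ℕ) : Prop :=
  (∀ b₁ b₂ : B, (β b₂ < β b₁ ∨ (β b₁ = β b₂ ∧ t b₁ < t b₂)) →
    1 ≤ ∑ a, q b₂ a → ∑ a, q b₁ a = qb b₁) ∧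
  (∀ a₁ a₂ : A, (α a₁ < α a₂ ∨ (α a₁ = α a₂ ∧ s a₁ < s a₂)) →
    1 ≤ ∑ b, q b a₂ → ∑ b, q b a₁ = qa a₁)

/-- `q` is uniform: all transactions happen at a common price `π`. -/
def IsUniform (β : B → ℕ) (α : A → ℕ) (q : B → A → ℕ) : Prop :=
  ∃ π : ℕ, ∀ b a, 0 < q b a → α a ≤ π ∧ π ≤ β b

/-- The bid competitiveness relation. -/
@[reducible] def compB (β t : B → ℕ) : B → B → Prop :=
  fun b₁ b₂ => β b₂ < β b₁ ∨ (β b₁ = β b₂ ∧ t b₁ < t b₂)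

/-- The ask competitiveness relation. -/
@[reducible] def compA (α s : A → ℕ) : A → A → Prop :=
  fun a₁ a₂ => α a₁ < α a₂ ∨ (α a₁ = α a₂ ∧ s a₁ < s a₂)

open Finset in
/-- From any matching one can construct a fair matching with the same volume,
preserving uniformity. -/
lemma exists_fair_matching_s6
    (β qb t : B → ℕ) (α qa s : A → ℕ)
    (ht : Function.Injective t) (hs : Function.Injective s)
    (q : B → A → ℕ) (hq : IsMatching β qb α qa q) :
    ∃ q' : B → A → ℕ, IsMatching β qb α qa q' ∧ IsFair β qb t α qa s q' ∧
      Vol q' = Vol q ∧ (IsUniform β α q → IsUniform β α q') := by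
  classical
  obtain ⟨hqp, hqr, hqc⟩ := hq
  set v := Vol q with hv
  have htrB : Transitive (compB β t) := by intro x y z h1 h2; unfold compB at *; omega
  have hirrB : ∀ b, ¬ compB β t b b := by intro b; unfold compB; omega
  have htotB : ∀ b₁ b₂ : B, b₁ ≠ b₂ → compB β t b₁ b₂ ∨ compB β t b₂ b₁ := by
    intro b₁ b₂ hne
    have := ht.ne hne
    unfold compB; omega
  have htrA : Transitive (compA α s) := by intro x y z h1 h2; unfold compA at *; omega
  have hirrA : ∀ a, ¬ compA α s a a := by intro a; unfold compA; omega
  have htotA : ∀ a₁ a₂ : A, a₁ ≠ a₂ → compA α s a₁ a₂ ∨ compA α s a₂ a₁ := by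
    intro a₁ a₂ hne
    have := hs.ne hne
    unfold compA; omega
  have hwB : v ≤ ∑ b, qb b := by
    rw [hv, Vol]; exact Finset.sum_le_sum fun b _ => hqr b
  have hwA : v ≤ ∑ a, qa a := by
    rw [hv, Vol, Finset.sum_comm]; exact Finset.sum_le_sum fun a _ => hqc a
  set q' : B → A → ℕ := fun b a => ((lI (compB β t) qb v b) ∩ (lJ (compA α s) qa v a)).card
    with hq'def
  have hrow : ∀ b, ∑ a, q' b a = (lI (compB β t) qb v b).card := by
    intro b
    exact sum_card_inter _ _ v (fun a a' h => lJ_disjoint htrA hirrA htotA h)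
      (lJ_biUnion htrA hirrA htotA hwA) (lI_subset b)
  have hcol : ∀ a, ∑ b, q' b a = (lJ (compA α s) qa v a).card := by
    intro a
    have heq : ∀ b, q' b a = ((lJ (compA α s) qa v a) ∩ (lI (compB β t) qb v b)).card := by
      intro b; rw [hq'def]; rw [Finset.inter_comm]
    simp only [heq]
    exact sum_card_inter _ _ v (fun b b' h => lI_disjoint htrB hirrB htotB h)
      (lI_biUnion htrB hirrB htotB hwB) (lJ_subset a)
  have hkey : ∀ p : ℕ,
      v ≤ (∑ b' ∈ univ.filter (fun b' => p ≤ β b'), qb b')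
        + (∑ a' ∈ univ.filter (fun a' => α a' < p), qa a') := by
    intro p
    have h1 : v = (∑ a' ∈ univ.filter (fun a' => α a' < p), ∑ b', q b' a')
        + ∑ a' ∈ univ.filter (fun a' => ¬ α a' < p), ∑ b', q b' a' := by
      rw [hv, Vol, Finset.sum_comm, Finset.sum_filter_add_sum_filter_not]
    have h2 : (∑ a' ∈ univ.filter (fun a' => α a' < p), ∑ b', q b' a')
        ≤ ∑ a' ∈ univ.filter (fun a' => α a' < p), qa a' :=
      Finset.sum_le_sum fun a' _ => hqc a'
    have h3 : ∑ a' ∈ univ.filter (fun a' => ¬ α a' < p), ∑ b', q b' a'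
        ≤ ∑ b' ∈ univ.filter (fun b' => p ≤ β b'), qb b' := by
      rw [Finset.sum_comm]
      have hsplit := Finset.sum_filter_add_sum_filter_not univ (fun b' => p ≤ β b')
          (fun b' => ∑ a' ∈ univ.filter (fun a' => ¬ α a' < p), q b' a')
      have hzero : ∑ b' ∈ univ.filter (fun b' => ¬ p ≤ β b'),
          (∑ a' ∈ univ.filter (fun a' => ¬ α a' < p), q b' a') = 0 := by
        apply Finset.sum_eq_zero
        intro b' hb'
        simp only [mem_filter, mem_univ, true_and, not_le] at hb'
        apply Finset.sum_eq_zero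
        intro a' ha'
        simp only [mem_filter, mem_univ, true_and, not_lt] at ha'
        by_contra hne
        have := hqp b' a' (Nat.pos_of_ne_zero hne)
        omega
      have hle2 : (∑ b' ∈ univ.filter (fun b' => p ≤ β b'),
            ∑ a' ∈ univ.filter (fun a' => ¬ α a' < p), q b' a')
          ≤ ∑ b' ∈ univ.filter (fun b' => p ≤ β b'), qb b' :=
        Finset.sum_le_sum fun b' _ =>
          le_trans (Finset.sum_le_sum_of_subset (Finset.filter_subset _ _)) (hqr b')
      omega
    omega
  have hprice : ∀ b a, 0 < q' b a → α a ≤ β b := by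
    intro b a hpos
    obtain ⟨k, hk⟩ := Finset.card_pos.mp hpos
    rw [Finset.mem_inter] at hk
    obtain ⟨hkI, hkJ⟩ := hk
    simp only [lI, lJ, mem_Ico] at hkI hkJ
    by_contra hcon
    push_neg at hcon
    have hC : (∑ b' ∈ univ.filter (fun b' => α a ≤ β b'), qb b') ≤ lcum (compB β t) qb b := by
      apply Finset.sum_le_sum_of_subset
      intro x hx
      simp only [mem_filter, mem_univ, true_and] at hx ⊢
      exact Or.inl (lt_of_lt_of_le hcon hx)
    have hD : (∑ a' ∈ univ.filter (fun a' => α a' < α a), qa a') ≤ lcum (compA α s) qa a := by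
      apply Finset.sum_le_sum_of_subset
      intro x hx
      simp only [mem_filter, mem_univ, true_and] at hx ⊢
      exact Or.inl hx
    have h1 := hkey (α a)
    unfold lS lE at hkI hkJ
    omega
  have hmatch : IsMatching β qb α qa q' :=
    ⟨hprice, fun b => by rw [hrow b]; exact lI_card_le b,
      fun a => by rw [hcol a, lJ_card]; exact lI_card_le a⟩
  have hvol : Vol q' = v := by
    rw [Vol]
    simp only [hrow]
    rw [← Finset.card_biUnion (fun b _ b' _ h => lI_disjoint htrB hirrB htotB h),
      lI_biUnion htrB hirrB htotB hwB, Nat.card_Ico]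
    omega
  have hfair : IsFair β qb t α qa s q' := by
    constructor
    · intro b₁ b₂ hcomp hpos
      rw [hrow b₂] at hpos
      rw [hrow b₁]
      exact lI_full htrB hirrB hcomp hpos
    · intro a₁ a₂ hcomp hpos
      rw [hcol a₂, lJ_card] at hpos
      rw [hcol a₁, lJ_card]
      exact lI_full htrA hirrA hcomp hpos
  have hunif : IsUniform β α q → IsUniform β α q' := by
    rintro ⟨π, hπ⟩
    refine ⟨π, fun b a hpos => ?_⟩
    obtain ⟨k, hk⟩ := Finset.card_pos.mp hpos
    rw [Finset.mem_inter] at hk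
    obtain ⟨hkI, hkJ⟩ := hk
    simp only [lI, lJ, mem_Ico] at hkI hkJ
    constructor
    · by_contra hcon
      push_neg at hcon
      have hcA : v ≤ lcum (compA α s) qa a := by
        have h1 : v ≤ ∑ a' ∈ univ.filter (fun a' => α a' ≤ π), qa a' := by
          have h2 : v = (∑ a' ∈ univ.filter (fun a' => α a' ≤ π), ∑ b', q b' a')
              + ∑ a' ∈ univ.filter (fun a' => ¬ α a' ≤ π), ∑ b', q b' a' := by
            rw [hv, Vol, Finset.sum_comm, Finset.sum_filter_add_sum_filter_not]
          have h3 : ∑ a' ∈ univ.filter (fun a' => ¬ α a' ≤ π), ∑ b', q b' a' = 0 := by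
            apply Finset.sum_eq_zero
            intro a' ha'
            simp only [mem_filter, mem_univ, true_and, not_le] at ha'
            apply Finset.sum_eq_zero
            intro b' _
            by_contra hne
            have := (hπ b' a' (Nat.pos_of_ne_zero hne)).1
            omega
          have h4 : (∑ a' ∈ univ.filter (fun a' => α a' ≤ π), ∑ b', q b' a')
              ≤ ∑ a' ∈ univ.filter (fun a' => α a' ≤ π), qa a' :=
            Finset.sum_le_sum fun a' _ => hqc a'
          omega
        refine le_trans h1 ?_
        apply Finset.sum_le_sum_of_subset
        intro x hx
        simp only [mem_filter, mem_univ, true_and] at hx ⊢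
        exact Or.inl (lt_of_le_of_lt hx hcon)
      unfold lS lE at hkJ
      omega
    · by_contra hcon
      push_neg at hcon
      have hcB : v ≤ lcum (compB β t) qb b := by
        have h1 : v ≤ ∑ b' ∈ univ.filter (fun b' => π ≤ β b'), qb b' := by
          have h2 : v = (∑ b' ∈ univ.filter (fun b' => π ≤ β b'), ∑ a', q b' a')
              + ∑ b' ∈ univ.filter (fun b' => ¬ π ≤ β b'), ∑ a', q b' a' := by
            rw [hv, Vol, Finset.sum_filter_add_sum_filter_not]
          have h3 : ∑ b' ∈ univ.filter (fun b' => ¬ π ≤ β b'), ∑ a', q b' a' = 0 := by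
            apply Finset.sum_eq_zero
            intro b' hb'
            simp only [mem_filter, mem_univ, true_and, not_le] at hb'
            apply Finset.sum_eq_zero
            intro a' _
            by_contra hne
            have := (hπ b' a' (Nat.pos_of_ne_zero hne)).2
            omega
          have h4 : (∑ b' ∈ univ.filter (fun b' => π ≤ β b'), ∑ a', q b' a')
              ≤ ∑ b' ∈ univ.filter (fun b' => π ≤ β b'), qb b' :=
            Finset.sum_le_sum fun b' _ => hqr b'
          omega
        refine le_trans h1 ?_
        apply Finset.sum_le_sum_of_subset
        intro x hx
        simp only [mem_filter, mem_univ, true_and] at hx ⊢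
        exact Or.inl (lt_of_lt_of_le hcon hx)
      unfold lS lE at hkI
      omega
  exact ⟨q', hmatch, hfair, by rw [hvol], hunif⟩

/-- with `V₁` the maximum volume over all matchings, `V₂` over all fair
matchings, `V₃` over all uniform matchings, and `V₄` over all uniform and fair matchings,
we have `V₁ = V₂ ≥ V₃ = V₄`. -/
theorem max_volumes_relation
    (β qb t : B → ℕ) (α qa s : A → ℕ)
    (hqb : ∀ b, 1 ≤ qb b) (hqa : ∀ a, 1 ≤ qa a)
    (ht : Function.Injective t) (hs : Function.Injective s)
    (V₁ V₂ V₃ V₄ : ℕ)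
    (h₁ : IsGreatest {v | ∃ q : B → A → ℕ, IsMatching β qb α qa q ∧ Vol q = v} V₁)
    (h₂ : IsGreatest {v | ∃ q : B → A → ℕ, IsMatching β qb α qa q ∧
            IsFair β qb t α qa s q ∧ Vol q = v} V₂)
    (h₃ : IsGreatest {v | ∃ q : B → A → ℕ, IsMatching β qb α qa q ∧
            IsUniform β α q ∧ Vol q = v} V₃)
    (h₄ : IsGreatest {v | ∃ q : B → A → ℕ, IsMatching β qb α qa q ∧
            IsUniform β α q ∧ IsFair β qb t α qa s q ∧ Vol q = v} V₄) :
    V₁ = V₂ ∧ V₃ ≤ V₂ ∧ V₃ = V₄ := by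
  obtain ⟨⟨q₁, hm₁, hv₁⟩, hub₁⟩ := h₁
  obtain ⟨⟨q₂, hm₂, hf₂, hv₂⟩, hub₂⟩ := h₂
  obtain ⟨⟨q₃, hm₃, hu₃, hv₃⟩, hub₃⟩ := h₃
  obtain ⟨⟨q₄, hm₄, hu₄, hf₄, hv₄⟩, hub₄⟩ := h₄
  obtain ⟨q₁', hm₁', hf₁', hvol₁', -⟩ := exists_fair_matching_s6 β qb t α qa s ht hs q₁ hm₁
  obtain ⟨q₃', hm₃', hf₃', hvol₃', hu₃'⟩ := exists_fair_matching_s6 β qb t α qa s ht hs q₃ hm₃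
  refine ⟨le_antisymm ?_ ?_, ?_, le_antisymm ?_ ?_⟩
  · exact hub₂ ⟨q₁', hm₁', hf₁', by rw [hvol₁', hv₁]⟩
  · exact hub₁ ⟨q₂, hm₂, hv₂⟩
  · exact hub₂ ⟨q₃', hm₃', hf₃', by rw [hvol₃', hv₃]⟩
  · exact hub₄ ⟨q₃', hm₃', hu₃' hu₃, hf₃', by rw [hvol₃', hv₃]⟩
  · exact hub₃ ⟨q₄, hm₄, hu₄, hv₄⟩


end ExchangeProblem
end

section
/- Suppose x : Fin n → Fin n is not injective. Let m be the least element of {1, …, n} that is not of the form (x i)+1 for any i (such m exists by the pigeonhole principle), and let r be the least value v ∈ {1, …, n} such that (x i)+1 = v for at least two indices i. If m < r, then every matching with bids Ω (unit-quantity orders with prices 1, 2, …, n) and asks Λ (unit-quantity orders where order i has price (x i)+1) has volume at most n − 1. -/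
/-- suppose `x : Fin n → Fin n` is not injective, `m` is the least element of
`{1, …, n}` not of the form `(x i)+1`, and `r` is the least value in `{1, …, n}` taken at
least twice by `i ↦ (x i)+1`. If `m < r`, then every matching with bids `Ω`
(bid `i` has price `i+1`, quantity 1) and asks `Λ` (ask `i` has price `(x i)+1`,
quantity 1) has volume at most `n - 1`. -/
theorem matching_volume_le_of_missing_lt_repeated (n : ℕ) (hn : 1 ≤ n)
    (x : Fin n → Fin n) (hx : ¬ Function.Injective x)
    (m r : ℕ)
    (hm : IsLeast {v : ℕ | 1 ≤ v ∧ v ≤ n ∧ ∀ i : Fin n, (x i : ℕ) + 1 ≠ v} m)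
    (hr : IsLeast {v : ℕ | 1 ≤ v ∧ v ≤ n ∧
            ∃ i j : Fin n, i ≠ j ∧ (x i : ℕ) + 1 = v ∧ (x j : ℕ) + 1 = v} r)
    (hmr : m < r)
    (q : Fin n → Fin n → ℕ)
    (htradable : ∀ i j, 0 < q i j → (x j : ℕ) + 1 ≤ (i : ℕ) + 1)
    (hbid : ∀ i, ∑ j, q i j ≤ 1)
    (hask : ∀ j, ∑ i, q i j ≤ 1) :
    ∑ i, ∑ j, q i j ≤ n - 1 := by
  obtain ⟨⟨hm1, hmn, hmiss⟩, hmleast⟩ := hm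
  obtain ⟨⟨hr1, hrn, _⟩, hrleast⟩ := hr
  classical
  set S : Finset (Fin n) := Finset.univ.filter (fun j => (x j : ℕ) + 1 ≤ m) with hS
  -- asks with price ≤ m are at most m - 1
  have hScard : S.card ≤ m - 1 := by
    have hmaps : ∀ j ∈ S, (x j : ℕ) ∈ Finset.range (m - 1) := by
      intro j hj
      simp only [hS, Finset.mem_filter] at hj
      have := hmiss j
      simp only [Finset.mem_range]
      omega
    have hinj : Set.InjOn (fun j => (x j : ℕ)) S := by
      intro j1 h1 j2 h2 heq
      by_contra hne
      have heq' : (x j1 : ℕ) = (x j2 : ℕ) := heq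
      have hlt := (x j1).isLt
      have hv : r ≤ (x j1 : ℕ) + 1 := by
        apply hrleast
        exact ⟨by omega, by omega, j1, j2, hne, rfl, by omega⟩
      have h1' : j1 ∈ S := h1
      simp only [hS, Finset.mem_filter] at h1'
      omega
    calc S.card ≤ (Finset.range (m - 1)).card :=
          Finset.card_le_card_of_injOn _ hmaps hinj
      _ = m - 1 := Finset.card_range _
  set T : Finset (Fin n) := Finset.univ.filter (fun i => m ≤ (i : ℕ)) with hT
  have hTcard : T.card ≤ n - m := by
    have hmaps : ∀ i ∈ T, (i : ℕ) - m ∈ Finset.range (n - m) := by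
      intro i hi
      simp only [hT, Finset.mem_filter] at hi
      have := i.isLt
      simp only [Finset.mem_range]
      omega
    have hinj : Set.InjOn (fun i : Fin n => (i : ℕ) - m) T := by
      intro i1 h1 i2 h2 heq
      have heq' : (i1 : ℕ) - m = (i2 : ℕ) - m := heq
      have h1' : i1 ∈ T := h1
      have h2' : i2 ∈ T := h2
      simp only [hT, Finset.mem_filter] at h1' h2'
      exact Fin.ext (by omega)
    calc T.card ≤ (Finset.range (n - m)).card :=
          Finset.card_le_card_of_injOn _ hmaps hinj
      _ = n - m := Finset.card_range _
  have hswap : ∑ i, ∑ j, q i j = ∑ j, ∑ i, q i j := Finset.sum_comm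
  have hsplit : ∑ j, ∑ i, q i j
      = (∑ j ∈ S, ∑ i, q i j)
        + ∑ j ∈ Finset.univ.filter (fun j => ¬ ((x j : ℕ) + 1 ≤ m)), ∑ i, q i j :=
    (Finset.sum_filter_add_sum_filter_not Finset.univ
      (fun j => (x j : ℕ) + 1 ≤ m) _).symm
  have h1 : ∑ j ∈ S, ∑ i, q i j ≤ m - 1 := by
    calc ∑ j ∈ S, ∑ i, q i j ≤ ∑ j ∈ S, 1 :=
          Finset.sum_le_sum (fun j _ => hask j)
      _ = S.card := by simp
      _ ≤ m - 1 := hScard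
  have h2 : ∑ j ∈ Finset.univ.filter (fun j => ¬ ((x j : ℕ) + 1 ≤ m)), ∑ i, q i j
      ≤ n - m := by
    rw [Finset.sum_comm]
    have hzero : ∀ i ∈ Finset.univ, i ∉ T →
        ∑ j ∈ Finset.univ.filter (fun j => ¬ ((x j : ℕ) + 1 ≤ m)), q i j = 0 := by
      intro i _ hi
      simp only [hT, Finset.mem_filter, Finset.mem_univ, true_and, not_le] at hi
      apply Finset.sum_eq_zero
      intro j hj
      simp only [Finset.mem_filter, not_le] at hj
      by_contra hq
      have := htradable i j (Nat.pos_of_ne_zero hq)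
      omega
    calc ∑ i, ∑ j ∈ Finset.univ.filter (fun j => ¬ ((x j : ℕ) + 1 ≤ m)), q i j
        = ∑ i ∈ T, ∑ j ∈ Finset.univ.filter (fun j => ¬ ((x j : ℕ) + 1 ≤ m)), q i j :=
          (Finset.sum_subset (Finset.subset_univ T) hzero).symm
      _ ≤ ∑ i ∈ T, ∑ j, q i j := by
          apply Finset.sum_le_sum
          intro i _
          exact Finset.sum_le_sum_of_subset (Finset.filter_subset _ _)
      _ ≤ ∑ i ∈ T, 1 := Finset.sum_le_sum (fun i _ => hbid i)
      _ = T.card := by simp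
      _ ≤ n - m := hTcard
  have := add_le_add h1 h2
  omega
end

section
/- Suppose x : Fin n → Fin n is not injective. Let m be the least element of {1, …, n} that is not of the form (x i)+1 for any i (such m exists by the pigeonhole principle), and let r be the least value v ∈ {1, …, n} such that (x i)+1 = v for at least two indices i. If m > r, then every matching with bids Λ (unit-quantity orders where order i has price (x i)+1) and asks Ω (unit-quantity orders with prices 1, 2, …, n) has volume at most n − 1. -/
/-!
Cut the asks at the least missing price `m`. Asks priced below `m` carry at most `m - 1` units;
asks priced at least `m` can only trade with bids priced at least `m`. Every price below `m` is
some bid's price and the repeated price `r < m` belongs to two bids, so at least `m` bids are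
priced below `m` and at most `n - m` bids remain above. Hence the volume is at most
`(m - 1) + (n - m) = n - 1`.
-/

open Finset

section Matching

variable {α β P : Type*} [Fintype α] [Fintype β] [LinearOrder P]
  (bidPrice : β → P) (askPrice : α → P) (q : β → α → ℕ)

theorem matching_volume_le_card_lt_add_card_le
    (htradable : ∀ i j, 0 < q i j → askPrice j ≤ bidPrice i)
    (hbid : ∀ i, ∑ j, q i j ≤ 1) (hask : ∀ j, ∑ i, q i j ≤ 1) (t : P) :
    ∑ i, ∑ j, q i j ≤ #{j | askPrice j < t} + #{i | t ≤ bidPrice i} := by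
  have hhigh : ∀ i, ∑ j ∈ {j | ¬ askPrice j < t}, q i j ≤ if t ≤ bidPrice i then 1 else 0 := by
    intro i
    split_ifs with hi
    · exact (sum_le_sum_of_subset (subset_univ _)).trans (hbid i)
    · refine (sum_eq_zero fun j hj => ?_).le
      by_contra hq
      have := htradable i j (Nat.pos_of_ne_zero hq)
      simp only [mem_filter, mem_univ, true_and] at hj
      exact hi (le_of_not_gt hj |>.trans this)
  calc ∑ i, ∑ j, q i j
      = ∑ j ∈ {j | askPrice j < t}, ∑ i, q i j + ∑ i, ∑ j ∈ {j | ¬ askPrice j < t}, q i j := by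
        rw [sum_comm, ← sum_filter_add_sum_filter_not univ (fun j => askPrice j < t)]
        exact congrArg _ sum_comm
    _ ≤ ∑ _j ∈ {j | askPrice j < t}, 1 + ∑ i, if t ≤ bidPrice i then 1 else 0 :=
        add_le_add (sum_le_sum fun j _ => hask j) (sum_le_sum fun i _ => hhigh i)
    _ = #{j | askPrice j < t} + #{i | t ≤ bidPrice i} := by
        simp only [sum_boole, sum_const, smul_eq_mul, mul_one, Nat.cast_id]

end Matching

theorem lt_card_filter_lt_of_forall_mem_range {ι : Type*} [Fintype ι] (f : ι → ℕ) (k : ℕ)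
    (hsurj : ∀ v < k, ∃ i, f i = v) {i j : ι} (hij : i ≠ j) (hfij : f i = f j) (hk : f i < k) :
    k < #{i | f i < k} := by
  set s : Finset ι := {i | f i < k}
  have hrange : range k ⊆ s.image f := fun v hv => by
    obtain ⟨i, rfl⟩ := hsurj v (mem_range.mp hv)
    exact mem_image_of_mem f (by simpa [s] using hv)
  have hnotInj : ¬ Set.InjOn f s := fun hinj =>
    hij (hinj (by simpa [s] using hk) (by simpa [s, ← hfij] using hk) hfij)
  calc k = #(range k) := (card_range k).symm
    _ ≤ #(s.image f) := card_le_card hrange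
    _ < #s := lt_of_le_of_ne card_image_le (mt card_image_iff.mp hnotInj)

theorem matching_volume_le_of_repeated_lt_missing_general (n : ℕ)
    (x : Fin n → Fin n)
    (m r : ℕ)
    (hm : IsLeast {v : ℕ | 1 ≤ v ∧ v ≤ n ∧ ∀ i : Fin n, (x i : ℕ) + 1 ≠ v} m)
    (hr : IsLeast {v : ℕ | 1 ≤ v ∧ v ≤ n ∧
            ∃ i j : Fin n, i ≠ j ∧ (x i : ℕ) + 1 = v ∧ (x j : ℕ) + 1 = v} r)
    (hmr : r < m)
    (q : Fin n → Fin n → ℕ)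
    (htradable : ∀ i j, 0 < q i j → (j : ℕ) + 1 ≤ (x i : ℕ) + 1)
    (hbid : ∀ i, ∑ j, q i j ≤ 1)
    (hask : ∀ j, ∑ i, q i j ≤ 1) :
    ∑ i, ∑ j, q i j ≤ n - 1 := by
  obtain ⟨⟨hm1, hmn, -⟩, hmin⟩ := hm
  obtain ⟨⟨-, -, i₀, j₀, hij, hxi₀, hxj₀⟩, -⟩ := hr
  have hsurj : ∀ v < m - 1, ∃ i, (x i : ℕ) = v := fun v hv => by
    by_contra! hmiss
    have : m ≤ v + 1 := hmin ⟨by omega, by omega, fun i => by have := hmiss i; omega⟩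
    omega
  have hlow : m - 1 < #{i | (x i : ℕ) < m - 1} :=
    lt_card_filter_lt_of_forall_mem_range (fun i => (x i : ℕ)) (m - 1) hsurj hij
      (by show (x i₀ : ℕ) = x j₀; omega) (by show (x i₀ : ℕ) < m - 1; omega)
  have hsplit := card_filter_add_card_filter_not (s := univ) (fun i : Fin n => (x i : ℕ) < m - 1)
  have hcut := matching_volume_le_card_lt_add_card_le (fun i => (x i : ℕ)) (fun j : Fin n => (j : ℕ))
    q (fun i j h => by have := htradable i j h; omega) hbid hask (m - 1)
  simp only [not_lt, card_univ, Fintype.card_fin] at hsplit hcut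
  rw [Fin.card_filter_val_lt] at hcut
  omega

/-- suppose `x : Fin n → Fin n` is not injective, `m` is the least element of
`{1, …, n}` not of the form `(x i)+1`, and `r` is the least value in `{1, …, n}` taken at
least twice by `i ↦ (x i)+1`. If `m > r`, then every matching with bids `Λ`
(bid `i` has price `(x i)+1`, quantity 1) and asks `Ω` (ask `i` has price `i+1`,
quantity 1) has volume at most `n - 1`. -/
theorem matching_volume_le_of_repeated_lt_missing (n : ℕ) (hn : 1 ≤ n)
    (x : Fin n → Fin n) (hx : ¬ Function.Injective x)
    (m r : ℕ)
    (hm : IsLeast {v : ℕ | 1 ≤ v ∧ v ≤ n ∧ ∀ i : Fin n, (x i : ℕ) + 1 ≠ v} m)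
    (hr : IsLeast {v : ℕ | 1 ≤ v ∧ v ≤ n ∧
            ∃ i j : Fin n, i ≠ j ∧ (x i : ℕ) + 1 = v ∧ (x j : ℕ) + 1 = v} r)
    (hmr : r < m)
    (q : Fin n → Fin n → ℕ)
    (htradable : ∀ i j, 0 < q i j → (j : ℕ) + 1 ≤ (x i : ℕ) + 1)
    (hbid : ∀ i, ∑ j, q i j ≤ 1)
    (hask : ∀ j, ∑ i, q i j ≤ 1) :
    ∑ i, ∑ j, q i j ≤ n - 1 :=
  matching_volume_le_of_repeated_lt_missing_general n x m r hm hr hmr q htradable hbid hask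
end

section
/- Correctness of the reduction from element distinctness to maximum-volume matching: x : Fin n → Fin n is injective if and only if both of the following hold: (1) the maximum volume of a matching with bids Ω and asks Λ equals n, and (2) the maximum volume of a matching with bids Λ and asks Ω equals n. -/
open Finset

lemma vol_le_card (n : ℕ) (q : Fin n → Fin n → ℕ) (hrow : ∀ i, ∑ j, q i j ≤ 1) :
    ∑ i, ∑ j, q i j ≤ n := by
  calc ∑ i, ∑ j, q i j ≤ ∑ _i : Fin n, 1 := Finset.sum_le_sum fun i _ => hrow i
  _ = n := by simp

lemma exists_perm_of_full (n : ℕ) (q : Fin n → Fin n → ℕ)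
    (hrow : ∀ i, ∑ j, q i j ≤ 1) (hcol : ∀ j, ∑ i, q i j ≤ 1)
    (htot : ∑ i, ∑ j, q i j = n) :
    ∃ σ : Fin n → Fin n, Function.Bijective σ ∧ ∀ j, 0 < q (σ j) j := by
  have hcol1 : ∀ j, ∑ i, q i j = 1 := by
    have h : ∑ j, ∑ i, q i j = ∑ _j : Fin n, 1 := by
      rw [Finset.sum_comm, htot]; simp
    intro j
    exact ((Finset.sum_eq_sum_iff_of_le (fun j _ => hcol j)).mp h) j (mem_univ j)
  have hex : ∀ j, ∃ i, 0 < q i j := by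
    intro j
    obtain ⟨i, _, hi⟩ := Finset.exists_ne_zero_of_sum_ne_zero
      (s := (univ : Finset (Fin n))) (f := fun i => q i j) (by rw [hcol1 j]; norm_num)
    exact ⟨i, Nat.pos_of_ne_zero hi⟩
  choose σ hσ using hex
  have hinj : Function.Injective σ := by
    intro j j' h
    by_contra hne
    have h2 : 2 ≤ ∑ k, q (σ j) k := by
      calc 2 ≤ q (σ j) j + q (σ j) j' := by
            have h1 := hσ j; have h' := hσ j'; rw [← h] at h'; omega
      _ = ∑ k ∈ ({j, j'} : Finset (Fin n)), q (σ j) k := (Finset.sum_pair hne).symm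
      _ ≤ ∑ k, q (σ j) k := Finset.sum_le_sum_of_subset (subset_univ _)
    have := hrow (σ j); omega
  exact ⟨σ, Finite.injective_iff_bijective.mp hinj, hσ⟩

/-- correctness of the reduction: `x : Fin n → Fin n` is injective iff
the maximum volume of a matching with bids `Ω` (bid `i` has price `i+1`, quantity 1) and
asks `Λ` (ask `i` has price `(x i)+1`, quantity 1) equals `n`, and the maximum volume of
a matching with bids `Λ` and asks `Ω` also equals `n`. -/
theorem injective_iff_max_matching_volumes (n : ℕ) (hn : 1 ≤ n) (x : Fin n → Fin n) :
    Function.Injective x ↔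
      (IsGreatest {v : ℕ | ∃ q : Fin n → Fin n → ℕ,
          (∀ i j, 0 < q i j → (x j : ℕ) + 1 ≤ (i : ℕ) + 1) ∧
          (∀ i, ∑ j, q i j ≤ 1) ∧
          (∀ j, ∑ i, q i j ≤ 1) ∧
          (∑ i, ∑ j, q i j = v)} n ∧
       IsGreatest {v : ℕ | ∃ q : Fin n → Fin n → ℕ,
          (∀ i j, 0 < q i j → (j : ℕ) + 1 ≤ (x i : ℕ) + 1) ∧
          (∀ i, ∑ j, q i j ≤ 1) ∧
          (∀ j, ∑ i, q i j ≤ 1) ∧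
          (∑ i, ∑ j, q i j = v)} n) := by
  constructor
  · intro hx
    have hbij : Function.Bijective x := Finite.injective_iff_bijective.mp hx
    set e : Fin n ≃ Fin n := Equiv.ofBijective x hbij with he
    have hex : ∀ j, e j = x j := fun j => rfl
    refine ⟨⟨⟨fun i j => if x j = i then 1 else 0, ?_, ?_, ?_, ?_⟩, ?_⟩,
            ⟨⟨fun i j => if j = x i then 1 else 0, ?_, ?_, ?_, ?_⟩, ?_⟩⟩
    · intro i j h
      dsimp only at h
      split at h
      · next heq => simp [heq]
      · omega
    · intro i
      have h := Equiv.sum_comp e (fun k => if k = i then (1:ℕ) else 0)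
      simp only [hex] at h
      rw [h]
      simp [Finset.sum_ite_eq']
    · intro j
      simp [Finset.sum_ite_eq]
    · rw [Finset.sum_comm]
      have : ∀ j : Fin n, ∑ i, (if x j = i then (1:ℕ) else 0) = 1 := by
        intro j; simp [Finset.sum_ite_eq]
      rw [Finset.sum_congr rfl (fun j _ => this j)]
      simp
    · intro v hv
      obtain ⟨q, _, hrow, _, htot⟩ := hv
      exact htot ▸ vol_le_card n q hrow
    · intro i j h
      dsimp only at h
      split at h
      · next heq => simp [heq]
      · omega
    · intro i
      simp [Finset.sum_ite_eq']
    · intro j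
      have h := Equiv.sum_comp e (fun k => if j = k then (1:ℕ) else 0)
      simp only [hex] at h
      rw [h]
      simp [Finset.sum_ite_eq']
    · have : ∀ i : Fin n, ∑ j, (if j = x i then (1:ℕ) else 0) = 1 := by
        intro i; simp [Finset.sum_ite_eq']
      rw [Finset.sum_congr rfl (fun i _ => this i)]
      simp
    · intro v hv
      obtain ⟨q, _, hrow, _, htot⟩ := hv
      exact htot ▸ vol_le_card n q hrow
  · rintro ⟨⟨⟨q₁, hc₁, hr₁, hcl₁, ht₁⟩, _⟩, ⟨⟨q₂, hc₂, hr₂, hcl₂, ht₂⟩, _⟩⟩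
    obtain ⟨σ, hσbij, hσ⟩ := exists_perm_of_full n q₁ hr₁ hcl₁ ht₁
    obtain ⟨τ, hτbij, hτ⟩ := exists_perm_of_full n (fun i j => q₂ j i)
      hcl₂ hr₂ (by rw [Finset.sum_comm]; exact ht₂)
    have hxσ : ∀ j, (x j : ℕ) ≤ (σ j : ℕ) := by
      intro j
      have := hc₁ (σ j) j (hσ j)
      omega
    have hτx : ∀ i, (τ i : ℕ) ≤ (x i : ℕ) := by
      intro i
      have := hc₂ i (τ i) (hτ i)
      omega
    have hσsum : ∑ j, (σ j : ℕ) = ∑ k : Fin n, (k : ℕ) :=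
      Fintype.sum_bijective σ hσbij _ _ (fun j => rfl)
    have hτsum : ∑ i, (τ i : ℕ) = ∑ k : Fin n, (k : ℕ) :=
      Fintype.sum_bijective τ hτbij _ _ (fun j => rfl)
    have h1 : ∑ j, (x j : ℕ) ≤ ∑ k : Fin n, (k : ℕ) :=
      hσsum ▸ Finset.sum_le_sum (fun j _ => hxσ j)
    have h2 : ∑ k : Fin n, (k : ℕ) ≤ ∑ i, (x i : ℕ) :=
      hτsum ▸ Finset.sum_le_sum (fun i _ => hτx i)
    have heq : ∑ j, (x j : ℕ) = ∑ j, (σ j : ℕ) := by omega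
    have hpt : ∀ j, (x j : ℕ) = (σ j : ℕ) :=
      fun j => (Finset.sum_eq_sum_iff_of_le (fun j _ => hxσ j)).mp heq j (mem_univ j)
    have hxeq : ∀ j, x j = σ j := fun j => Fin.ext (hpt j)
    intro a b hab
    apply hσbij.injective
    rw [← hxeq a, ← hxeq b, hab]
end

section
/- Suppose x : Fin n → Fin n is not injective, m is the least element of {1, …, n} not of the form (x i)+1 for any i, and r is the least value v ∈ {1, …, n} such that (x i)+1 = v for at least two indices i. If m < r, then the number of indices i with (x i)+1 < m is exactly m − 1. -/
/-- suppose `x : Fin n → Fin n` is not injective, `m` is the least element of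
`{1, …, n}` not of the form `(x i)+1`, and `r` is the least value in `{1, …, n}` taken at
least twice by `i ↦ (x i)+1`. If `m < r`, then the number of indices `i` with
`(x i)+1 < m` is exactly `m - 1`. -/
theorem card_lt_missing_eq (n : ℕ) (hn : 1 ≤ n)
    (x : Fin n → Fin n) (hx : ¬ Function.Injective x)
    (m r : ℕ)
    (hm : IsLeast {v : ℕ | 1 ≤ v ∧ v ≤ n ∧ ∀ i : Fin n, (x i : ℕ) + 1 ≠ v} m)
    (hr : IsLeast {v : ℕ | 1 ≤ v ∧ v ≤ n ∧
            ∃ i j : Fin n, i ≠ j ∧ (x i : ℕ) + 1 = v ∧ (x j : ℕ) + 1 = v} r)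
    (hmr : m < r) :
    (Finset.univ.filter (fun i : Fin n => (x i : ℕ) + 1 < m)).card = m - 1 := by
  obtain ⟨⟨hm1, hmn, hmiss⟩, hmle⟩ := hm
  obtain ⟨_, hrle⟩ := hr
  have key : (Finset.univ.filter (fun i : Fin n => (x i : ℕ) + 1 < m)).card
      = (Finset.Ico 1 m).card := by
    apply Finset.card_bij (fun i _ => (x i : ℕ) + 1)
    · intro i hi
      simp only [Finset.mem_filter] at hi
      exact Finset.mem_Ico.mpr ⟨Nat.le_add_left 1 _, hi.2⟩
    · intro i hi j hj hij
      simp only [Finset.mem_filter] at hi hj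
      by_contra hne
      have hval : (x i : ℕ) + 1 ≤ n := Nat.succ_le_of_lt (x i).isLt
      have : r ≤ (x i : ℕ) + 1 :=
        hrle ⟨Nat.le_add_left 1 _, hval, i, j, hne, rfl, hij.symm⟩
      omega
    · intro v hv
      rw [Finset.mem_Ico] at hv
      have hvn : v ≤ n := le_trans (Nat.le_of_lt hv.2) hmn
      have : ¬ (1 ≤ v ∧ v ≤ n ∧ ∀ i : Fin n, (x i : ℕ) + 1 ≠ v) := by
        intro h
        exact absurd (hmle h) (not_le.mpr hv.2)
      push_neg at this
      obtain ⟨i, hi⟩ := this hv.1 hvn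
      exact ⟨i, Finset.mem_filter.mpr ⟨Finset.mem_univ i, by omega⟩, hi⟩
  rw [key, Nat.card_Ico]
end

section
/- Let n ≥ 1 and let C be a set of pairs of indices in Fin n × Fin n. Suppose there exist two distinct permutations σ and τ of Fin n such that for every (i, j) ∈ C, σ i ≤ σ j, and for every (i, j) ∈ C, τ i ≤ τ j. Then there exists a function f : Fin n → Fin n that is not injective and satisfies f i ≤ f j for every (i, j) ∈ C. -/
/-- if two distinct permutations `σ, τ` of `Fin n` both satisfy every
comparison constraint in `C` (i.e. `σ i ≤ σ j` and `τ i ≤ τ j` for all `(i, j) ∈ C`),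
then there is a non-injective function `f : Fin n → Fin n` satisfying all constraints
in `C` as well. -/
theorem exists_noninjective_respecting_constraints (n : ℕ) (hn : 1 ≤ n)
    (C : Set (Fin n × Fin n))
    (σ τ : Equiv.Perm (Fin n)) (hστ : σ ≠ τ)
    (hσ : ∀ p ∈ C, σ p.1 ≤ σ p.2)
    (hτ : ∀ p ∈ C, τ p.1 ≤ τ p.2) :
    ∃ f : Fin n → Fin n, ¬ Function.Injective f ∧ ∀ p ∈ C, f p.1 ≤ f p.2 := by
  refine ⟨fun i => min (σ i) (τ i), ?_, ?_⟩
  · intro hf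
    -- f is injective hence a bijection, so its sum equals the sum of σ
    have hsum : ∀ (g : Equiv.Perm (Fin n)),
        ∑ i : Fin n, ((g i : ℕ)) = ∑ i : Fin n, (i : ℕ) := by
      intro g
      exact Equiv.sum_comp (g : Fin n ≃ Fin n) (fun i => (i : ℕ))
    have hbij : Function.Bijective (fun i => min (σ i) (τ i)) :=
      Finite.injective_iff_bijective.mp hf
    let e : Equiv.Perm (Fin n) := Equiv.ofBijective _ hbij
    have hesum : ∑ i : Fin n, ((min (σ i) (τ i) : Fin n) : ℕ) = ∑ i : Fin n, (i : ℕ) := by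
      have := hsum e
      simpa [e, Equiv.ofBijective] using this
    have hpt : ∀ (g : Equiv.Perm (Fin n)), (∀ i : Fin n, min (σ i) (τ i) ≤ g i) →
        ∀ i, min (σ i) (τ i) = g i := by
      intro g hle i
      by_contra hne
      have hlt : (((min (σ i) (τ i) : Fin n)) : ℕ) < (g i : ℕ) :=
        lt_of_le_of_ne (by exact_mod_cast hle i) (fun h => hne (Fin.ext h))
      have : ∑ j : Fin n, ((min (σ j) (τ j) : Fin n) : ℕ) < ∑ j : Fin n, ((g j : ℕ)) :=
        Finset.sum_lt_sum (fun j _ => by exact_mod_cast hle j) ⟨i, Finset.mem_univ i, hlt⟩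
      rw [hesum, hsum g] at this
      exact lt_irrefl _ this
    have h1 := hpt σ (fun i => min_le_left _ _)
    have h2 := hpt τ (fun i => min_le_right _ _)
    exact hστ (Equiv.ext fun i => (h1 i).symm.trans (h2 i))
  · intro p hp
    exact min_le_min (hσ p hp) (hτ p hp)
end
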